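/- There is an absolute constant C > 0 such that for every r > 0 the absolutely convergent integral ∫_0^∞ J_1(σ)/√(r² + σ²) dσ satisfies both ∫_0^∞ J_1(σ)/√(r² + σ²) dσ ≤ 2/r and |∫_0^∞ J_1(σ)/√(r² + σ²) dσ| ≤ C r^{-1/2}. -/

import Mathlib

/-- The Bessel function of the first kind of integer order `n`, defined via the
integral representation `J_n(x) = (1/(2π)) ∫_{-π}^{π} e^{i(n s + x sin s)} ds`. -/
noncomputable def besselJ (n : ℤ) (x : ℝ) : ℝ :=
  (1 / (2 * Real.pi)) *
    (∫ s in (-Real.pi)..Real.pi,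
      Complex.exp (Complex.I * ((n : ℂ) * (s : ℂ) + (x : ℂ) * (Real.sin s : ℂ)))).re

/-!
Write `J_n` for `besselJ n`. It is `(-1)ⁿ` times the classical Bessel function, which is why
`J_0' = J_1` below carries no sign.

Differentiating the integral representation gives the three-term recurrence and
`J_n' = (J_{n+1} - J_{n-1}) / 2`, hence `J_0' = J_1` and `J_1' = -J_0 - J_1 / x`. The function
`L = x (J_0² + J_1²) + J_0 J_1` has `L' = -J_0 J_1 / x`, which makes `L e^{1/x}` decrease on
`[1, ∞)`; since `L ≥ (x - 1/2) (J_0² + J_1²)`, this yields `J_1(x)² ≤ 18 / x`. Together with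
`|J_1(x)| ≤ |x|` it makes the integrand integrable with `|∫| ≤ 11` uniformly in `r`. Writing
`J_1 = J_0'` and integrating by parts against the decreasing `(r² + σ²)^{-1/2}`, with `|J_0| ≤ 1`,
gives `|∫| ≤ 2 / r`; the two bounds combine to `11 r^{-1/2}`.
-/

open MeasureTheory Real Set Filter Topology

lemma besselJ_eq_integral_cos (n : ℤ) (x : ℝ) :
    besselJ n x = (2 * π)⁻¹ * ∫ s in (-π)..π, cos (n * s + x * sin s) := by
  have hexp : ∀ s : ℝ, Complex.exp (Complex.I * (n * s + x * sin s))
      = Complex.exp ((n * s + x * sin s : ℝ) * Complex.I) := fun s => by push_cast; ring_nf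
  have hint : IntervalIntegrable
      (fun s : ℝ => Complex.exp ((n * s + x * sin s : ℝ) * Complex.I)) volume (-π) π :=
    (by fun_prop : Continuous _).intervalIntegrable _ _
  rw [besselJ, one_div, funext hexp, ← Complex.reCLM_apply,
    ← Complex.reCLM.intervalIntegral_comp_comm hint]
  simp only [Complex.reCLM_apply, Complex.exp_ofReal_mul_I_re]

lemma intervalIntegrable_cos_bessel_phase (n : ℤ) (x : ℝ) :
    IntervalIntegrable (fun s => cos (n * s + x * sin s)) volume (-π) π :=
  (by fun_prop : Continuous _).intervalIntegrable _ _

lemma bessel_phase_add_one (n : ℤ) (x s : ℝ) :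
    ((n + 1 : ℤ) : ℝ) * s + x * sin s = (n * s + x * sin s) + s := by push_cast; ring

lemma bessel_phase_sub_one (n : ℤ) (x s : ℝ) :
    ((n - 1 : ℤ) : ℝ) * s + x * sin s = (n * s + x * sin s) - s := by push_cast; ring

lemma besselJ_add_one_add_besselJ_sub_one (n : ℤ) (x : ℝ) :
    besselJ (n + 1) x + besselJ (n - 1) x
      = π⁻¹ * ∫ s in (-π)..π, cos s * cos (n * s + x * sin s) := by
  rw [besselJ_eq_integral_cos, besselJ_eq_integral_cos, ← mul_add,
    ← intervalIntegral.integral_add (intervalIntegrable_cos_bessel_phase _ _)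
      (intervalIntegrable_cos_bessel_phase _ _),
    ← intervalIntegral.integral_const_mul, ← intervalIntegral.integral_const_mul]
  congr 1 with s
  rw [bessel_phase_add_one, bessel_phase_sub_one, cos_add, cos_sub]
  field_simp
  ring

lemma besselJ_add_one_sub_besselJ_sub_one (n : ℤ) (x : ℝ) :
    besselJ (n + 1) x - besselJ (n - 1) x
      = -π⁻¹ * ∫ s in (-π)..π, sin s * sin (n * s + x * sin s) := by
  rw [besselJ_eq_integral_cos, besselJ_eq_integral_cos, ← mul_sub,
    ← intervalIntegral.integral_sub (intervalIntegrable_cos_bessel_phase _ _)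
      (intervalIntegrable_cos_bessel_phase _ _),
    ← intervalIntegral.integral_const_mul, ← intervalIntegral.integral_const_mul]
  congr 1 with s
  rw [bessel_phase_add_one, bessel_phase_sub_one, cos_add, cos_sub]
  field_simp
  ring

lemma integral_deriv_bessel_phase_mul_cos (n : ℤ) (x : ℝ) :
    ∫ s in (-π)..π, (n + x * cos s) * cos (n * s + x * sin s) = 0 := by
  have hderiv (s : ℝ) : HasDerivAt (fun s => sin (n * s + x * sin s))
      ((n + x * cos s) * cos (n * s + x * sin s)) s := by
    have := (((hasDerivAt_id s).const_mul (n : ℝ)).add ((hasDerivAt_sin s).const_mul x)).sin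
    simpa [mul_comm] using this
  rw [intervalIntegral.integral_eq_sub_of_hasDerivAt (fun s _ => hderiv s)
    ((by fun_prop : Continuous _).intervalIntegrable _ _)]
  simp [sin_int_mul_pi]

lemma besselJ_recurrence (n : ℤ) (x : ℝ) :
    n * besselJ n x + x / 2 * (besselJ (n + 1) x + besselJ (n - 1) x) = 0 := by
  have h := integral_deriv_bessel_phase_mul_cos n x
  simp only [add_mul, mul_assoc] at h
  rw [intervalIntegral.integral_add ((intervalIntegrable_cos_bessel_phase n x).const_mul _)
      (((by fun_prop : Continuous _).intervalIntegrable _ _).const_mul _),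
    intervalIntegral.integral_const_mul, intervalIntegral.integral_const_mul] at h
  rw [besselJ_add_one_add_besselJ_sub_one, besselJ_eq_integral_cos]
  field_simp
  linear_combination h

lemma hasDerivAt_besselJ (n : ℤ) (x : ℝ) :
    HasDerivAt (besselJ n) ((besselJ (n + 1) x - besselJ (n - 1) x) / 2) x := by
  have hF (y s : ℝ) : HasDerivAt (fun y => cos (n * s + y * sin s))
      (-sin s * sin (n * s + y * sin s)) y := by
    have := (((hasDerivAt_id y).mul_const (sin s)).const_add ((n : ℝ) * s)).cos
    simpa [mul_comm] using this
  have hint := (intervalIntegral.hasDerivAt_integral_of_dominated_loc_of_deriv_le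
    (bound := fun _ => 1) (Metric.ball_mem_nhds x one_pos)
    (Eventually.of_forall fun y => (by fun_prop : Continuous _).aestronglyMeasurable)
    (intervalIntegrable_cos_bessel_phase n x)
    (by fun_prop : Continuous _).aestronglyMeasurable
    (Eventually.of_forall fun s _ y _ => by
      simpa [abs_mul] using mul_le_one₀ (abs_sin_le_one s) (abs_nonneg _) (abs_sin_le_one _))
    intervalIntegrable_const
    (Eventually.of_forall fun s _ y _ => hF y s)).2.const_mul (2 * π)⁻¹
  rw [besselJ_add_one_sub_besselJ_sub_one, funext (besselJ_eq_integral_cos n)]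
  refine hint.congr_deriv ?_
  simp only [neg_mul, intervalIntegral.integral_neg]
  ring

lemma abs_besselJ_le_one (n : ℤ) (x : ℝ) : |besselJ n x| ≤ 1 := by
  have h := intervalIntegral.norm_integral_le_of_norm_le_const (a := -π) (b := π)
    (f := fun s => cos (n * s + x * sin s)) (C := 1) fun s _ => by
      simpa using abs_cos_le_one _
  rw [besselJ_eq_integral_cos, abs_mul, abs_of_pos (by positivity)]
  rw [Real.norm_eq_abs, abs_of_pos (by linarith [pi_pos] : 0 < π - -π)] at h
  calc (2 * π)⁻¹ * |∫ s in (-π)..π, cos (n * s + x * sin s)|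
      ≤ (2 * π)⁻¹ * (1 * (π - -π)) := by gcongr
    _ = 1 := by field_simp; ring

lemma besselJ_zero_zero : besselJ 0 0 = 1 := by
  rw [besselJ_eq_integral_cos]
  simp only [Int.cast_zero, zero_mul, add_zero, cos_zero, intervalIntegral.integral_const,
    smul_eq_mul, mul_one]
  field_simp
  ring

lemma continuous_besselJ (n : ℤ) : Continuous (besselJ n) :=
  continuous_iff_continuousAt.2 fun x => (hasDerivAt_besselJ n x).continuousAt

lemma besselJ_neg_one {x : ℝ} (hx : x ≠ 0) : besselJ (-1) x = -besselJ 1 x := by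
  have h := besselJ_recurrence 0 x
  norm_num at h
  rcases h with h | h
  · exact absurd h hx
  · linarith

lemma besselJ_two {x : ℝ} (hx : x ≠ 0) :
    besselJ 2 x = -2 * besselJ 1 x / x - besselJ 0 x := by
  have h := besselJ_recurrence 1 x
  norm_num at h
  field_simp
  linarith

lemma hasDerivAt_besselJ_zero {x : ℝ} (hx : x ≠ 0) :
    HasDerivAt (besselJ 0) (besselJ 1 x) x := by
  simpa [besselJ_neg_one hx] using hasDerivAt_besselJ 0 x

lemma hasDerivAt_besselJ_one {x : ℝ} (hx : x ≠ 0) :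
    HasDerivAt (besselJ 1) (-besselJ 0 x - besselJ 1 x / x) x := by
  convert hasDerivAt_besselJ 1 x using 1
  norm_num [besselJ_two hx]
  field_simp
  ring

lemma abs_besselJ_one_le (x : ℝ) : |besselJ 1 x| ≤ |x| := by
  have h := besselJ_recurrence 1 x
  norm_num at h
  have h' : besselJ 1 x = -(x / 2) * (besselJ 2 x + besselJ 0 x) := by linarith
  have hsum : |besselJ 2 x + besselJ 0 x| ≤ 2 :=
    (abs_add_le _ _).trans (by linarith [abs_besselJ_le_one 2 x, abs_besselJ_le_one 0 x])
  rw [h', abs_mul, abs_neg, abs_div, abs_two]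
  nlinarith [abs_nonneg x]

noncomputable def besselLyapunov (x : ℝ) : ℝ :=
  x * (besselJ 0 x ^ 2 + besselJ 1 x ^ 2) + besselJ 0 x * besselJ 1 x

lemma hasDerivAt_besselLyapunov {x : ℝ} (hx : x ≠ 0) :
    HasDerivAt besselLyapunov (-(besselJ 0 x * besselJ 1 x) / x) x := by
  have h0 := hasDerivAt_besselJ_zero hx
  have h1 := hasDerivAt_besselJ_one hx
  refine (((hasDerivAt_id x).mul ((h0.pow 2).add (h1.pow 2))).add (h0.mul h1)).congr_deriv ?_
  simp only [id, Pi.add_apply, Pi.pow_apply]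
  field_simp
  ring

lemma sub_half_mul_le_besselLyapunov (x : ℝ) :
    (x - 1 / 2) * (besselJ 0 x ^ 2 + besselJ 1 x ^ 2) ≤ besselLyapunov x := by
  unfold besselLyapunov
  nlinarith [sq_nonneg (besselJ 0 x + besselJ 1 x)]

lemma antitoneOn_besselLyapunov_mul_exp_inv :
    AntitoneOn (fun x => besselLyapunov x * exp x⁻¹) (Ici 1) := by
  have hderiv {x : ℝ} (hx : x ∈ Ici 1) : HasDerivAt (fun x => besselLyapunov x * exp x⁻¹)
      (-exp x⁻¹ / x ^ 2 * (besselLyapunov x + x * (besselJ 0 x * besselJ 1 x))) x := by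
    have hx0 : x ≠ 0 := by linarith [mem_Ici.1 hx]
    refine ((hasDerivAt_besselLyapunov hx0).mul (hasDerivAt_inv hx0).exp).congr_deriv ?_
    field_simp
    ring
  refine antitoneOn_of_hasDerivWithinAt_nonpos (convex_Ici 1)
    (fun x hx => (hderiv hx).continuousAt.continuousWithinAt)
    (fun x hx => (hderiv (interior_subset hx)).hasDerivWithinAt) fun x hx => ?_
  have hx : 1 < x := by simpa using hx
  have hsum : 0 ≤ besselLyapunov x + x * (besselJ 0 x * besselJ 1 x) := by
    have := sub_half_mul_le_besselLyapunov x
    nlinarith [sq_nonneg (besselJ 0 x + besselJ 1 x)]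
  exact mul_nonpos_of_nonpos_of_nonneg
    (div_nonpos_of_nonpos_of_nonneg (neg_nonpos.2 (exp_pos _).le) (sq_nonneg x)) hsum

lemma besselLyapunov_le_nine {x : ℝ} (hx : 1 ≤ x) : besselLyapunov x ≤ 9 := by
  have hnonneg : 0 ≤ besselLyapunov x :=
    (mul_nonneg (by linarith) (by positivity)).trans (sub_half_mul_le_besselLyapunov x)
  have hone : besselLyapunov 1 ≤ 3 := by
    have h0 := abs_le.1 (abs_besselJ_le_one 0 1)
    have h1 := abs_le.1 (abs_besselJ_le_one 1 1)
    unfold besselLyapunov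
    nlinarith
  have he : exp 1 ≤ 3 := by linarith [exp_one_lt_d9]
  calc besselLyapunov x ≤ besselLyapunov x * exp x⁻¹ :=
        le_mul_of_one_le_right hnonneg (one_le_exp (by positivity))
    _ ≤ besselLyapunov 1 * exp 1⁻¹ :=
        antitoneOn_besselLyapunov_mul_exp_inv self_mem_Ici (mem_Ici.2 hx) hx
    _ ≤ 3 * 3 := by rw [inv_one]; gcongr
    _ = 9 := by norm_num

lemma abs_besselJ_one_le_rpow {x : ℝ} (hx : 1 ≤ x) :
    |besselJ 1 x| ≤ 5 * x ^ (-(1 : ℝ) / 2) := by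
  have hx0 : 0 < x := by linarith
  have hsq : besselJ 1 x ^ 2 ≤ 18 / x := by
    rw [le_div_iff₀ hx0]
    nlinarith [sub_half_mul_le_besselLyapunov x, besselLyapunov_le_nine hx,
      sq_nonneg (besselJ 0 x), sq_nonneg (besselJ 1 x)]
  refine abs_le_of_sq_le_sq (hsq.trans ?_) (by positivity)
  rw [mul_pow, ← rpow_mul_natCast hx0.le]
  norm_num [rpow_neg_one, div_eq_mul_inv]
  gcongr
  norm_num

section DecayingIntegrand

variable {f : ℝ → ℝ} {M C p : ℝ}

lemma integrableOn_Ioi_of_abs_le_of_abs_le_rpow (hf : ContinuousOn f (Ioi 0)) (hp : p < -1)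
    (h_near : ∀ x ∈ Ioc 0 1, |f x| ≤ M) (h_far : ∀ x, 1 ≤ x → |f x| ≤ C * x ^ p) :
    IntegrableOn f (Ioi 0) := by
  have hmeas : ∀ s ⊆ Ioi (0 : ℝ), MeasurableSet s →
      AEStronglyMeasurable f (volume.restrict s) :=
    fun s hs hsm => (hf.mono hs).aestronglyMeasurable hsm
  have h_near' : IntegrableOn f (Ioc 0 1) :=
    .of_bound measure_Ioc_lt_top (hmeas _ Ioc_subset_Ioi_self measurableSet_Ioc) M
      ((ae_restrict_iff' measurableSet_Ioc).2 (.of_forall h_near))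
  have h_far' : IntegrableOn f (Ioi 1) :=
    ((integrableOn_Ioi_rpow_of_lt hp one_pos).const_mul C).mono'
      (hmeas _ (Ioi_subset_Ioi zero_le_one) measurableSet_Ioi)
      ((ae_restrict_iff' measurableSet_Ioi).2 (.of_forall fun x hx => h_far x (le_of_lt hx)))
  simpa [Ioc_union_Ioi_eq_Ioi zero_le_one] using h_near'.union h_far'

lemma abs_integral_Ioi_le_of_abs_le_of_abs_le_rpow (hf : ContinuousOn f (Ioi 0)) (hp : p < -1)
    (h_near : ∀ x ∈ Ioc 0 1, |f x| ≤ M) (h_far : ∀ x, 1 ≤ x → |f x| ≤ C * x ^ p) :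
    |∫ x in Ioi 0, f x| ≤ M + C / (-p - 1) := by
  have hint : IntegrableOn (fun x => |f x|) (Ioi 0) :=
    (integrableOn_Ioi_of_abs_le_of_abs_le_rpow hf hp h_near h_far).abs
  have hsplit : ∫ x in Ioi 0, |f x| = (∫ x in Ioc 0 1, |f x|) + ∫ x in Ioi 1, |f x| := by
    rw [← setIntegral_union (Ioc_disjoint_Ioi le_rfl) measurableSet_Ioi
      (hint.mono_set Ioc_subset_Ioi_self) (hint.mono_set (Ioi_subset_Ioi zero_le_one)),
      Ioc_union_Ioi_eq_Ioi zero_le_one]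
  have hnear : ∫ x in Ioc 0 1, |f x| ≤ M := by
    simpa using setIntegral_mono_on (hint.mono_set Ioc_subset_Ioi_self)
      (integrableOn_const (by simp)) measurableSet_Ioc h_near
  have hfar : ∫ x in Ioi 1, |f x| ≤ C / (-p - 1) := by
    calc ∫ x in Ioi 1, |f x| ≤ ∫ x in Ioi 1, C * x ^ p :=
          setIntegral_mono_on (hint.mono_set (Ioi_subset_Ioi zero_le_one))
            ((integrableOn_Ioi_rpow_of_lt hp one_pos).const_mul C) measurableSet_Ioi
            fun x hx => h_far x (le_of_lt hx)
      _ = C / (-p - 1) := by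
        rw [integral_const_mul, integral_Ioi_rpow_of_lt hp one_pos, one_rpow]
        rw [show -p - 1 = -(p + 1) by ring, div_neg]
        ring
  calc |∫ x in Ioi 0, f x| ≤ ∫ x in Ioi 0, |f x| := abs_integral_le_integral_abs
    _ ≤ M + C / (-p - 1) := by linarith

end DecayingIntegrand

lemma abs_integral_Ioi_mul_deriv_le {u u' v v' : ℝ → ℝ} {a : ℝ}
    (hu : ∀ x ∈ Ici a, HasDerivAt u (u' x) x) (hu' : ∀ x ∈ Ioi a, u' x ≤ 0)
    (hu_top : Tendsto u atTop (𝓝 0)) (hv : ∀ x ∈ Ioi a, HasDerivAt v (v' x) x)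
    (hv_cont : ContinuousWithinAt v (Ioi a) a) (hv_le : ∀ x ∈ Ici a, |v x| ≤ 1)
    (huv' : IntegrableOn (fun x => u x * v' x) (Ioi a)) :
    |∫ x in Ioi a, u x * v' x| ≤ 2 * u a := by
  have hu'_int : IntegrableOn u' (Ioi a) := integrableOn_Ioi_deriv_of_nonpos' hu hu' hu_top
  have hu'_eq : ∫ x in Ioi a, -u' x = u a := by
    rw [integral_neg, integral_Ioi_of_hasDerivAt_of_nonpos' hu hu' hu_top]
    ring
  have hua : 0 ≤ u a :=
    hu'_eq ▸ setIntegral_nonneg measurableSet_Ioi fun x hx => neg_nonneg.2 (hu' x hx)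
  have hv_le' : ∀ᵐ x ∂volume.restrict (Ioi a), ‖v x‖ ≤ 1 :=
    (ae_restrict_iff' measurableSet_Ioi).2 (.of_forall fun x hx => hv_le x (Ioi_subset_Ici_self hx))
  have hu'v_int : IntegrableOn (fun x => u' x * v x) (Ioi a) :=
    hu'_int.mul_bdd (ContinuousOn.aestronglyMeasurable
      (fun x hx => (hv x hx).continuousAt.continuousWithinAt) measurableSet_Ioi) hv_le'
  have h_zero : Tendsto (u * v) (𝓝[>] a) (𝓝 (u a * v a)) :=
    ((hu a self_mem_Ici).continuousAt.continuousWithinAt.mul hv_cont).tendsto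
  have h_infty : Tendsto (u * v) atTop (𝓝 0) :=
    hu_top.zero_mul_isBoundedUnder_le (isBoundedUnder_of_eventually_le
      ((eventually_ge_atTop a).mono fun x hx => hv_le x hx))
  have h_rest : |∫ x in Ioi a, u' x * v x| ≤ u a := by
    calc |∫ x in Ioi a, u' x * v x| ≤ ∫ x in Ioi a, |u' x * v x| :=
          abs_integral_le_integral_abs
      _ ≤ ∫ x in Ioi a, -u' x := setIntegral_mono_on hu'v_int.abs hu'_int.neg measurableSet_Ioi
          fun x hx => by
            rw [abs_mul, abs_of_nonpos (hu' x hx)]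
            exact mul_le_of_le_one_right (neg_nonneg.2 (hu' x hx))
              (hv_le x (Ioi_subset_Ici_self hx))
      _ = u a := hu'_eq
  rw [integral_Ioi_mul_deriv_eq_deriv_mul (fun x hx => hu x (Ioi_subset_Ici_self hx)) hv huv'
    hu'v_int h_zero h_infty]
  have h_bdry : |u a * v a| ≤ u a := by
    rw [abs_mul, abs_of_nonneg hua]
    exact mul_le_of_le_one_right hua (hv_le a self_mem_Ici)
  calc |0 - u a * v a - ∫ x in Ioi a, u' x * v x|
      ≤ |u a * v a| + |∫ x in Ioi a, u' x * v x| := by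
        rw [zero_sub, ← neg_add', abs_neg]; exact abs_add_le _ _
    _ ≤ 2 * u a := by linarith

lemma hasDerivAt_inv_sqrt_sq_add_sq {r : ℝ} (hr : r ≠ 0) (x : ℝ) :
    HasDerivAt (fun x => (√(r ^ 2 + x ^ 2))⁻¹)
      (-(x / ((r ^ 2 + x ^ 2) * √(r ^ 2 + x ^ 2)))) x := by
  have hpos : 0 < r ^ 2 + x ^ 2 := by positivity
  have hsqrt := ((hasDerivAt_pow 2 x).const_add (r ^ 2)).sqrt hpos.ne'
  refine (hsqrt.inv (sqrt_pos.2 hpos).ne').congr_deriv ?_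
  rw [sq_sqrt hpos.le]
  field_simp
  ring

lemma tendsto_inv_sqrt_sq_add_sq_atTop (r : ℝ) :
    Tendsto (fun x => (√(r ^ 2 + x ^ 2))⁻¹) atTop (𝓝 0) :=
  tendsto_inv_atTop_zero.comp (tendsto_sqrt_atTop.comp
    (tendsto_atTop_add_const_left _ _ (tendsto_pow_atTop two_ne_zero)))

section BesselIntegrand

variable (r : ℝ)

lemma le_sqrt_sq_add_sq {x : ℝ} (hx : 0 ≤ x) : x ≤ √(r ^ 2 + x ^ 2) :=
  (le_sqrt hx (by positivity)).2 (by nlinarith)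

lemma continuousOn_besselJ_one_div_sqrt :
    ContinuousOn (fun x => besselJ 1 x / √(r ^ 2 + x ^ 2)) (Ioi 0) :=
  (continuous_besselJ 1).continuousOn.div (by fun_prop) fun x (hx : 0 < x) => by positivity

lemma abs_besselJ_one_div_sqrt_le_one {x : ℝ} (hx : 0 < x) :
    |besselJ 1 x / √(r ^ 2 + x ^ 2)| ≤ 1 := by
  rw [abs_div, abs_of_nonneg (sqrt_nonneg _), div_le_one (by positivity)]
  exact (abs_besselJ_one_le x).trans ((abs_of_pos hx).trans_le (le_sqrt_sq_add_sq r hx.le))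

lemma abs_besselJ_one_div_sqrt_le_rpow {x : ℝ} (hx : 1 ≤ x) :
    |besselJ 1 x / √(r ^ 2 + x ^ 2)| ≤ 5 * x ^ (-(3 : ℝ) / 2) := by
  have hx0 : 0 < x := by linarith
  calc |besselJ 1 x / √(r ^ 2 + x ^ 2)| ≤ 5 * x ^ (-(1 : ℝ) / 2) / x := by
        rw [abs_div, abs_of_nonneg (sqrt_nonneg _)]
        exact div_le_div₀ (by positivity) (abs_besselJ_one_le_rpow hx) hx0
          (le_sqrt_sq_add_sq r hx0.le)
    _ = 5 * x ^ (-(3 : ℝ) / 2) := by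
        rw [mul_div_assoc, div_eq_mul_inv _ x, ← rpow_neg_one, ← rpow_add hx0]
        norm_num

lemma integrableOn_besselJ_one_div_sqrt :
    IntegrableOn (fun x => besselJ 1 x / √(r ^ 2 + x ^ 2)) (Ioi 0) :=
  integrableOn_Ioi_of_abs_le_of_abs_le_rpow (continuousOn_besselJ_one_div_sqrt r) (by norm_num)
    (fun _ hx => abs_besselJ_one_div_sqrt_le_one r hx.1)
    fun _ hx => abs_besselJ_one_div_sqrt_le_rpow r hx

lemma abs_integral_besselJ_one_div_sqrt_le_eleven :
    |∫ x in Ioi 0, besselJ 1 x / √(r ^ 2 + x ^ 2)| ≤ 11 := by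
  have h := abs_integral_Ioi_le_of_abs_le_of_abs_le_rpow (continuousOn_besselJ_one_div_sqrt r)
    (by norm_num) (fun _ hx => abs_besselJ_one_div_sqrt_le_one r hx.1)
    fun _ hx => abs_besselJ_one_div_sqrt_le_rpow r hx
  norm_num at h
  linarith

variable {r}

lemma abs_integral_besselJ_one_div_sqrt_le_two_div (hr : 0 < r) :
    |∫ x in Ioi 0, besselJ 1 x / √(r ^ 2 + x ^ 2)| ≤ 2 / r := by
  have h := abs_integral_Ioi_mul_deriv_le (fun x _ => hasDerivAt_inv_sqrt_sq_add_sq hr.ne' x)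
    (fun x hx => neg_nonpos.2 (by have : 0 < x := hx; positivity))
    (tendsto_inv_sqrt_sq_add_sq_atTop r) (fun x hx => hasDerivAt_besselJ_zero (ne_of_gt hx))
    (continuous_besselJ 0).continuousWithinAt (fun x _ => abs_besselJ_le_one 0 x)
    (by simpa only [div_eq_inv_mul] using integrableOn_besselJ_one_div_sqrt r)
  calc |∫ x in Ioi 0, besselJ 1 x / √(r ^ 2 + x ^ 2)|
      = |∫ x in Ioi 0, (√(r ^ 2 + x ^ 2))⁻¹ * besselJ 1 x| := by simp only [div_eq_inv_mul]
    _ ≤ 2 * (√(r ^ 2 + 0 ^ 2))⁻¹ := h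
    _ = 2 / r := by simp [sqrt_sq hr.le, div_eq_mul_inv]

end BesselIntegrand

lemma le_mul_rpow_neg_half_of_le_of_le_div {x C r : ℝ} (hC : 0 ≤ C) (hr : 0 < r)
    (h₁ : x ≤ C) (h₂ : x ≤ C / r) : x ≤ C * r ^ (-(1 : ℝ) / 2) := by
  rcases le_total r 1 with hr1 | hr1
  · exact h₁.trans (le_mul_of_one_le_right hC (one_le_rpow_of_pos_of_le_one_of_nonpos hr hr1
      (by norm_num)))
  · refine h₂.trans ?_
    rw [div_eq_mul_inv, ← rpow_neg_one]
    exact mul_le_mul_of_nonneg_left (rpow_le_rpow_of_exponent_le hr1 (by norm_num)) hC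

/-- There is an absolute constant `C > 0` such that for every `r > 0` the absolutely
convergent integral `∫_0^∞ J_1(σ)/√(r² + σ²) dσ` satisfies both
`∫_0^∞ J_1(σ)/√(r² + σ²) dσ ≤ 2/r` and `|∫_0^∞ J_1(σ)/√(r² + σ²) dσ| ≤ C r^{-1/2}`. -/
theorem besselJ_integral_bounds :
    ∃ C : ℝ, 0 < C ∧ ∀ r : ℝ, 0 < r →
      MeasureTheory.IntegrableOn
        (fun σ => besselJ 1 σ / Real.sqrt (r ^ 2 + σ ^ 2)) (Set.Ioi 0) ∧
      (∫ σ in Set.Ioi (0 : ℝ), besselJ 1 σ / Real.sqrt (r ^ 2 + σ ^ 2)) ≤ 2 / r ∧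
      |∫ σ in Set.Ioi (0 : ℝ), besselJ 1 σ / Real.sqrt (r ^ 2 + σ ^ 2)| ≤
        C * r ^ (-(1 : ℝ) / 2) := by
  refine ⟨11, by norm_num, fun r hr => ⟨integrableOn_besselJ_one_div_sqrt r, ?_, ?_⟩⟩
  · exact (le_abs_self _).trans (abs_integral_besselJ_one_div_sqrt_le_two_div hr)
  · refine le_mul_rpow_neg_half_of_le_of_le_div (by norm_num) hr
      (abs_integral_besselJ_one_div_sqrt_le_eleven r) ?_
    exact (abs_integral_besselJ_one_div_sqrt_le_two_div hr).trans (by gcongr; norm_num)
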